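/- Let p be a prime. Then (1 - x) · exp(∑_{n ≥ 1} (pn)_p x^n / n) = P_p(x)^{p-1} as formal power series over ℚ, where P_p(x) = ∏_{n ≥ 0} (1 - x^{p^n})^{-1} and (pn)_p denotes the p-part of pn. -/

import Mathlib

open PowerSeries

/-- The formal exponential `exp f = ∑ₖ f^k / k!` of a power series `f` (with zero constant term). -/
noncomputable def expPS (f : PowerSeries ℚ) : PowerSeries ℚ :=
  PowerSeries.mk fun n =>
    ∑ k ∈ Finset.range (n + 1), (PowerSeries.coeff n (f ^ k)) / (Nat.factorial k)

/-- The series `∑_{n ≥ 1} a n * x^n / n`. -/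
noncomputable def serA (a : ℕ → ℚ) : PowerSeries ℚ :=
  PowerSeries.mk fun n => if n = 0 then 0 else a n / n

/-- The `(x)`-adic limit of the partial products `∏_{n ≤ N} f n`: this is the infinite product `∏_{n ≥ 0} f n` whenever the factor `f n` is `≡ 1 mod x^n`. -/
noncomputable def prodPS (f : ℕ → PowerSeries ℚ) : PowerSeries ℚ :=
  PowerSeries.mk fun N => PowerSeries.coeff N (∏ n ∈ Finset.range (N + 1), f n)

/-- The generating function `P_p(x) = ∏_{n ≥ 0} (1 - x^(p^n))⁻¹` for partitions into powers of `p`. -/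
noncomputable def partitionProd (p : ℕ) : PowerSeries ℚ :=
  prodPS fun n => ((1 : PowerSeries ℚ) - PowerSeries.X ^ (p ^ n))⁻¹

/-!
Both sides have constant term `1`, so it suffices that they satisfy the same linear differential
equation `F' = u F`. The factor `(1 - X^k)⁻¹` has logarithmic derivative
`k X^(k-1) / (1 - X^k) = ∑_{k ∣ j+1} k X^j`, so `P_p` (which agrees with its partial products
modulo high powers of `X`) has logarithmic derivative `∑_j σ_j X^j`, where `σ_j` is the sum of the
powers of `p` dividing `j + 1`. Since `(p - 1) σ_j = p^(1 + ν_p(j+1)) - 1`, the logarithmic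
derivative of `P_p^(p-1)` is the derivative of the exponent minus `1/(1 - X)`, which is the
logarithmic derivative of `(1 - X) exp(…)`.
-/

open Finset

namespace Derivation

variable {R A : Type*} [CommSemiring R] [CommRing A] [Algebra R A] (D : Derivation R A A)

theorem map_prod_of_eq_mul {ι : Type*} (s : Finset ι) {a u : ι → A}
    (h : ∀ i ∈ s, D (a i) = u i * a i) : D (∏ i ∈ s, a i) = (∑ i ∈ s, u i) * ∏ i ∈ s, a i := by
  classical
  induction s using Finset.induction_on with
  | empty => simp
  | insert i s hi ih =>
    rw [prod_insert hi, sum_insert hi, leibniz, smul_eq_mul, smul_eq_mul,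
      h i (mem_insert_self i s), ih fun j hj => h j (mem_insert_of_mem hj)]
    ring

theorem map_pow_of_eq_mul {a u : A} (h : D a = u * a) (n : ℕ) : D (a ^ n) = (n * u) * a ^ n := by
  cases n with
  | zero => simp
  | succ n => rw [leibniz_pow, h, nsmul_eq_mul, smul_eq_mul, Nat.add_sub_cancel, pow_succ]; ring

end Derivation

namespace Nat

theorem filter_range_pow_dvd {p m M : ℕ} (hp : p ≠ 1) (hm : m ≠ 0) (hM : m < p ^ M) :
    {n ∈ range M | p ^ n ∣ m} = range (padicValNat p m + 1) := by
  have hdvd (n : ℕ) : p ^ n ∣ m ↔ n ≤ padicValNat p m := padicValNat_dvd_iff_le_of_ne_one hp hm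
  have hlt : padicValNat p m < M := by
    by_contra! hle
    exact absurd (Nat.le_of_dvd (Nat.pos_of_ne_zero hm)
      ((pow_dvd_pow p hle).trans ((hdvd _).mpr le_rfl))) (not_le.mpr hM)
  ext n
  simp only [mem_filter, mem_range, hdvd]
  omega

end Nat

namespace PowerSeries

theorem smodEq_X_pow_iff {R : Type*} [CommRing R] {f g : R⟦X⟧} {n : ℕ} :
    f ≡ g [SMOD Ideal.span {(X : R⟦X⟧) ^ n}] ↔ ∀ m < n, coeff m f = coeff m g := by
  simp only [SModEq.sub_mem, Ideal.mem_span_singleton, X_pow_dvd_iff, map_sub, sub_eq_zero]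

theorem prod_range_smodEq_of_le {R : Type*} [CommRing R] {f : ℕ → R⟦X⟧}
    (hf : ∀ n, f n ≡ 1 [SMOD Ideal.span {(X : R⟦X⟧) ^ n}]) {N M : ℕ} (hNM : N ≤ M) :
    ∏ n ∈ range M, f n ≡ ∏ n ∈ range N, f n [SMOD Ideal.span {(X : R⟦X⟧) ^ N}] := by
  have htail : ∏ n ∈ Ico N M, f n ≡ ∏ n ∈ Ico N M, 1 [SMOD Ideal.span {(X : R⟦X⟧) ^ N}] :=
    SModEq.prod fun n hn => (hf n).mono <|
      Ideal.span_singleton_le_span_singleton.mpr (pow_dvd_pow X (mem_Ico.mp hn).1)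
  rw [prod_const_one] at htail
  simpa [prod_range_mul_prod_Ico f hNM] using SModEq.mul (SModEq.refl (∏ n ∈ range N, f n)) htail

theorem derivative_one_sub_X_mul_of_eq_mul {R : Type*} [CommRing R] {E v : R⟦X⟧}
    (h : d⁄dX R E = v * E) : d⁄dX R ((1 - X) * E) = (v - mk 1) * ((1 - X) * E) := by
  have hmk : (mk 1 : R⟦X⟧) * (1 - X) = 1 := mk_one_mul_one_sub_eq_one R
  rw [Derivation.leibniz, smul_eq_mul, smul_eq_mul, h, map_sub, derivative_one, derivative_X]
  linear_combination E * hmk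

section Field

variable {K : Type*} [Field K]

theorem eq_of_derivative_eq_mul [CharZero K] {F G u : K⟦X⟧} (hF : d⁄dX K F = u * F)
    (hG : d⁄dX K G = u * G) (hG0 : constantCoeff G ≠ 0) (h0 : constantCoeff F = constantCoeff G) :
    F = G := by
  have hGG : G * G⁻¹ = 1 := PowerSeries.mul_inv_cancel G hG0
  have hquot : F * G⁻¹ = 1 := by
    refine derivative.ext ?_ ?_
    · rw [Derivation.leibniz, derivative_inv', hF, hG, derivative_one, smul_eq_mul, smul_eq_mul]
      linear_combination (-(u * F * G⁻¹)) * hGG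
    · simp [h0, hG0]
  calc F = F * G⁻¹ * G := by rw [mul_assoc, mul_comm G⁻¹, hGG, mul_one]
    _ = G := by rw [hquot, one_mul]

theorem mul_inv_one_sub_X_pow {k : ℕ} (hk : k ≠ 0) :
    (1 - X ^ k : K⟦X⟧) * (1 - X ^ k)⁻¹ = 1 :=
  PowerSeries.mul_inv_cancel _ (by simp [hk])

theorem inv_one_sub_X_pow_smodEq_one (k : ℕ) :
    (1 - X ^ k : K⟦X⟧)⁻¹ ≡ 1 [SMOD Ideal.span {(X : K⟦X⟧) ^ k}] := by
  rcases eq_or_ne k 0 with rfl | hk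
  · simp [Ideal.span_singleton_one]
  · rw [SModEq.sub_mem, Ideal.mem_span_singleton]
    refine ⟨(1 - X ^ k)⁻¹, ?_⟩
    linear_combination mul_inv_one_sub_X_pow (K := K) hk

theorem coeff_inv_one_sub_X_pow {k : ℕ} (hk : k ≠ 0) (m : ℕ) :
    coeff m (1 - X ^ k : K⟦X⟧)⁻¹ = if k ∣ m then 1 else 0 := by
  have hexp : (1 - X ^ k : K⟦X⟧)⁻¹ = expand k hk (mk 1) := by
    rw [inv_eq_iff_mul_eq_one (by simp [hk])]
    simpa [map_sub, expand_X] using congrArg (expand k hk) (mk_one_mul_one_sub_eq_one K)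
  rw [hexp, coeff_expand]
  simp

theorem coeff_X_pow_pred_mul_inv_one_sub_X_pow {k : ℕ} (hk : k ≠ 0) (j : ℕ) :
    coeff j (X ^ (k - 1) * (1 - X ^ k : K⟦X⟧)⁻¹) = if k ∣ j + 1 then 1 else 0 := by
  rw [coeff_X_pow_mul', coeff_inv_one_sub_X_pow hk]
  by_cases hjk : k - 1 ≤ j
  · have hdvd : k ∣ j - (k - 1) ↔ k ∣ j + 1 := by
      rw [← Nat.dvd_add_self_right, show j - (k - 1) + k = j + 1 by omega]
    rw [if_pos hjk]
    exact if_congr hdvd rfl rfl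
  · rw [if_neg hjk, if_neg (Nat.not_dvd_of_pos_of_lt j.succ_pos (by omega))]

theorem derivative_inv_one_sub_X_pow (k : ℕ) :
    d⁄dX K (1 - X ^ k)⁻¹ = ((k : K⟦X⟧) * X ^ (k - 1) * (1 - X ^ k)⁻¹) * (1 - X ^ k)⁻¹ := by
  rw [derivative_inv', map_sub, derivative_one, derivative_pow, derivative_X]
  ring

end Field

theorem derivative_serA (a : ℕ → ℚ) : d⁄dX ℚ (serA a) = mk fun n => a (n + 1) := by
  ext n
  rw [coeff_derivative, serA, coeff_mk, coeff_mk, if_neg n.succ_ne_zero]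
  push_cast
  field_simp

theorem constantCoeff_serA (a : ℕ → ℚ) : constantCoeff (serA a) = 0 := by
  rw [← coeff_zero_eq_constantCoeff_apply, serA, coeff_mk, if_pos rfl]

theorem expPS_eq_subst {f : ℚ⟦X⟧} (hf : constantCoeff f = 0) : expPS f = (exp ℚ).subst f := by
  ext n
  have hsupp : (Function.support fun d => coeff d (exp ℚ) • coeff n (f ^ d)) ⊆ range (n + 1) := by
    intro d hd
    by_contra hdn
    have hlt : n < d := by simpa using hdn
    rw [Function.mem_support] at hd
    exact hd (by rw [X_pow_dvd_iff.mp (pow_dvd_pow_of_dvd (X_dvd_iff.mpr hf) d) n hlt, smul_zero])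
  rw [coeff_subst' (HasSubst.of_constantCoeff_zero' hf), finsum_eq_sum_of_support_subset _ hsupp,
    expPS, coeff_mk]
  simp [div_eq_inv_mul]

theorem derivative_expPS {f : ℚ⟦X⟧} (hf : constantCoeff f = 0) :
    d⁄dX ℚ (expPS f) = d⁄dX ℚ f * expPS f := by
  rw [expPS_eq_subst hf, derivative_subst (HasSubst.of_constantCoeff_zero' hf), derivative_exp,
    mul_comm]

theorem constantCoeff_expPS (f : ℚ⟦X⟧) : constantCoeff (expPS f) = 1 := by
  rw [← coeff_zero_eq_constantCoeff_apply, expPS, coeff_mk]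
  simp

theorem prodPS_smodEq_prod {f : ℕ → ℚ⟦X⟧} (hf : ∀ n, f n ≡ 1 [SMOD Ideal.span {(X : ℚ⟦X⟧) ^ n}])
    (M : ℕ) : prodPS f ≡ ∏ n ∈ range M, f n [SMOD Ideal.span {(X : ℚ⟦X⟧) ^ M}] := by
  refine smodEq_X_pow_iff.mpr fun m hm => ?_
  rw [prodPS, coeff_mk]
  exact (smodEq_X_pow_iff.mp (prod_range_smodEq_of_le hf hm) m m.lt_succ_self).symm

theorem constantCoeff_prodPS (f : ℕ → ℚ⟦X⟧) : constantCoeff (prodPS f) = constantCoeff (f 0) := by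
  rw [← coeff_zero_eq_constantCoeff_apply, prodPS, coeff_mk, prod_range_one,
    coeff_zero_eq_constantCoeff_apply]

theorem constantCoeff_partitionProd (p : ℕ) : constantCoeff (partitionProd p) = 1 := by
  simp [partitionProd, constantCoeff_prodPS]

theorem partitionProd_smodEq_prod {p : ℕ} (hp : 1 < p) (M : ℕ) :
    partitionProd p ≡ ∏ n ∈ range M, (1 - X ^ p ^ n : ℚ⟦X⟧)⁻¹
      [SMOD Ideal.span {(X : ℚ⟦X⟧) ^ M}] :=
  prodPS_smodEq_prod (fun _ => (inv_one_sub_X_pow_smodEq_one _).mono <|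
    Ideal.span_singleton_le_span_singleton.mpr (pow_dvd_pow X (Nat.lt_pow_self hp).le)) M

/-- The coefficient of `X ^ j` is the sum of the powers of `p` dividing `j + 1`. -/
noncomputable def partitionProdLogDeriv (p : ℕ) : ℚ⟦X⟧ :=
  mk fun j => ∑ n ∈ range (padicValNat p (j + 1) + 1), (p : ℚ) ^ n

theorem partitionProdLogDeriv_smodEq {p : ℕ} (hp : 1 < p) (M : ℕ) :
    partitionProdLogDeriv p ≡
      ∑ n ∈ range M, ((p ^ n : ℕ) : ℚ⟦X⟧) * X ^ (p ^ n - 1) * (1 - X ^ p ^ n)⁻¹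
      [SMOD Ideal.span {(X : ℚ⟦X⟧) ^ M}] := by
  refine smodEq_X_pow_iff.mpr fun j hj => ?_
  have hjM : j + 1 < p ^ M := (Nat.succ_le_of_lt hj).trans_lt (Nat.lt_pow_self hp)
  simp only [partitionProdLogDeriv, coeff_mk, map_sum, mul_assoc, ← map_natCast (C (R := ℚ)),
    coeff_C_mul, coeff_X_pow_pred_mul_inv_one_sub_X_pow (pow_ne_zero _ (by omega : p ≠ 0)),
    mul_ite, mul_one, mul_zero, ← sum_filter]
  rw [Nat.filter_range_pow_dvd hp.ne' j.succ_ne_zero hjM]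
  push_cast
  rfl

theorem derivative_partitionProd {p : ℕ} (hp : 1 < p) :
    d⁄dX ℚ (partitionProd p) = partitionProdLogDeriv p * partitionProd p := by
  ext N
  set M := N + 2
  set Q : ℚ⟦X⟧ := ∏ n ∈ range M, (1 - X ^ p ^ n)⁻¹
  have hQ : d⁄dX ℚ Q =
      (∑ n ∈ range M, ((p ^ n : ℕ) : ℚ⟦X⟧) * X ^ (p ^ n - 1) * (1 - X ^ p ^ n)⁻¹) * Q :=
    (d⁄dX ℚ).map_prod_of_eq_mul _ fun n _ => derivative_inv_one_sub_X_pow (p ^ n)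
  have hP := partitionProd_smodEq_prod hp M
  calc coeff N (d⁄dX ℚ (partitionProd p))
      = coeff N (d⁄dX ℚ Q) := by
        rw [coeff_derivative, coeff_derivative, smodEq_X_pow_iff.mp hP (N + 1) (by omega)]
    _ = coeff N (partitionProdLogDeriv p * partitionProd p) := by
        rw [hQ]
        exact (smodEq_X_pow_iff.mp ((partitionProdLogDeriv_smodEq hp M).mul hP) N (by omega)).symm

theorem natCast_pred_mul_partitionProdLogDeriv {p : ℕ} (hp : p ≠ 0) :
    ((p - 1 : ℕ) : ℚ⟦X⟧) * partitionProdLogDeriv p =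
      mk fun j => (p : ℚ) ^ (1 + padicValNat p (j + 1)) - 1 := by
  ext j
  rw [← map_natCast (C (R := ℚ)), coeff_C_mul, partitionProdLogDeriv, coeff_mk, coeff_mk,
    Nat.cast_pred (Nat.pos_of_ne_zero hp), mul_comm, geom_sum_mul, add_comm]

end PowerSeries

/-- `(1 - x) exp (∑_{n ≥ 1} (p n)_p x^n / n) = P_p(x)^(p-1)`, where
`(p n)_p = p^(1 + ν_p n)` is the p-part of `p n`. -/
theorem stmt_14 (p : ℕ) (hp : p.Prime) :
    ((1 : PowerSeries ℚ) - PowerSeries.X) *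
        expPS (serA fun n => (p : ℚ) ^ (1 + padicValNat p n)) =
      (partitionProd p) ^ (p - 1) := by
  set f := serA fun n => (p : ℚ) ^ (1 + padicValNat p n)
  have hlog : ((p - 1 : ℕ) : ℚ⟦X⟧) * partitionProdLogDeriv p = d⁄dX ℚ f - PowerSeries.mk 1 := by
    ext j
    simp [f, derivative_serA, natCast_pred_mul_partitionProdLogDeriv hp.ne_zero]
  refine eq_of_derivative_eq_mul (u := d⁄dX ℚ f - PowerSeries.mk 1)
    (derivative_one_sub_X_mul_of_eq_mul (derivative_expPS (constantCoeff_serA _))) ?_ ?_ ?_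
  · rw [(d⁄dX ℚ).map_pow_of_eq_mul (derivative_partitionProd hp.one_lt), hlog]
  · simp [constantCoeff_partitionProd]
  · simp [constantCoeff_expPS, constantCoeff_partitionProd]
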